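/- arXiv:0801.4320 — 6 statements merged into one kernel-verified Lean document; each statement's English description precedes it below -/
import Mathlib

section
/- In Ã = { Σ_{ν≥0} P_ν(a)·bᵛ } with relation ab − ba = b², if x ∈ Ã satisfies x·a ∈ b·Ã, then x ∈ b·Ã. -/
open PowerSeries

noncomputable section

/-- `ℂ[[z]]`, on which the algebra `Ã` acts faithfully. -/
abbrev PS := PowerSeries ℂ

/-- The operator `a := multiplication by z` on `ℂ[[z]]`. -/
def opA : Module.End ℂ PS where
  toFun f := X * f
  map_add' := by intro f g; ring
  map_smul' := by intro c f; simp [mul_smul_comm]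

/-- The operator `b := ∫₀ᶻ` (primitive without constant term) on `ℂ[[z]]`.
One has `a∘b - b∘a = b∘b`, so these operators realize the commutation relation
`a·b - b·a = b²` of `Ã`. -/
def opB : Module.End ℂ PS where
  toFun f := PowerSeries.mk fun n => if n = 0 then 0 else coeff (n - 1) f / (n : ℂ)
  map_add' := by
    intro f g; ext n; by_cases h : n = 0 <;> simp [h, add_div]
  map_smul' := by
    intro c f; ext n; by_cases h : n = 0 <;> simp [h, mul_div_assoc]

/-- The algebra `Ã = { Σ_{ν ≥ 0} P_ν(a)·bᵛ }` (with `P_ν ∈ ℂ[z]`, commutation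
relation `a·b − b·a = b²`), realized concretely as the set of endomorphisms of
`ℂ[[z]]` given by a (formal, `b`-adically convergent) series `Σ_ν P_ν(a)·bᵛ`
with polynomial coefficients `P_ν`.  Since `bᵛ` raises the `z`-order by `ν`,
the coefficient of `zⁿ` of `T f` only involves the terms with `ν ≤ n`. -/
def Atilde : Set (Module.End ℂ PS) :=
  {T | ∃ P : ℕ → Polynomial ℂ, ∀ (f : PS) (n : ℕ),
    coeff n (T f) =
      ∑ ν ∈ Finset.range (n + 1),
        coeff n ((Polynomial.aeval opA (P ν)) ((opB ^ ν) f))}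

-- basic coeff lemmas
lemma coeff_opB (f : PS) (n : ℕ) :
    coeff n (opB f) = if n = 0 then 0 else coeff (n - 1) f / (n : ℂ) := by
  simp [opB, coeff_mk]

lemma coeff_opB_succ (f : PS) (n : ℕ) :
    coeff (n + 1) (opB f) = coeff n f / (n + 1 : ℂ) := by
  simp [coeff_opB]

lemma opA_eq : opA = Algebra.lmul ℂ PS (X : PS) := by
  ext f : 1
  simp [opA]

lemma aeval_opA (P : Polynomial ℂ) (f : PS) :
    Polynomial.aeval opA P f = (Polynomial.aeval (X : PS) P) * f := by
  rw [opA_eq, Polynomial.aeval_algHom_apply]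
  rfl

lemma coeff_aeval_opA (P : Polynomial ℂ) (f : PS) (n : ℕ) :
    coeff n (Polynomial.aeval opA P f) =
      ∑ p ∈ Finset.HasAntidiagonal.antidiagonal n, P.coeff p.1 * coeff p.2 f := by
  have : Polynomial.aeval (X : PS) P = (P : PS) := by
    rw [Polynomial.aeval_def, ← Polynomial.eval₂_C_X_eq_coe]
    rfl
  rw [aeval_opA, this, coeff_mul]
  simp [Polynomial.coeff_coe]

lemma coeff_opB_pow_add (ν : ℕ) (f : PS) (n : ℕ) :
    coeff (ν + n) ((opB ^ ν) f) = coeff n f / ∏ i ∈ Finset.range ν, (n + 1 + i : ℂ) := by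
  induction ν generalizing f n with
  | zero => simp
  | succ ν ih =>
    have : (opB ^ (ν + 1)) f = (opB ^ ν) (opB f) := by
      rw [pow_succ, Module.End.mul_apply]
    rw [show ν + 1 + n = ν + (n + 1) by ring, this, ih, coeff_opB_succ,
      Finset.prod_range_succ', div_div]
    push_cast
    congr 1
    rw [mul_comm]
    congr 1
    · apply Finset.prod_congr rfl; intros; ring
    · ring

lemma coeff_opB_pow_lt (ν : ℕ) (f : PS) (n : ℕ) (h : n < ν) :
    coeff n ((opB ^ ν) f) = 0 := by
  induction ν generalizing f n with
  | zero => omega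
  | succ ν ih =>
    rw [pow_succ', Module.End.mul_apply, coeff_opB]
    rcases Nat.eq_zero_or_pos n with h0 | h0
    · simp [h0]
    · rw [if_neg (by omega), ih _ _ (by omega), zero_div]

lemma opB_pow_monomial (ν m : ℕ) :
    (opB ^ ν) ((X : PS) ^ m) =
      (∏ i ∈ Finset.range ν, (m + 1 + i : ℂ))⁻¹ • (X : PS) ^ (m + ν) := by
  ext n
  rcases Nat.lt_or_ge n ν with h | h
  · rw [coeff_opB_pow_lt _ _ _ h]
    rw [map_smul, coeff_X_pow, if_neg (by omega), smul_zero]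
  · obtain ⟨j, rfl⟩ : ∃ j, n = ν + j := ⟨n - ν, by omega⟩
    rw [coeff_opB_pow_add, map_smul, coeff_X_pow, coeff_X_pow]
    by_cases hj : j = m
    · subst hj
      rw [if_pos rfl, if_pos (by omega)]
      simp [div_eq_inv_mul]
    · rw [if_neg hj, if_neg (by omega)]
      simp

lemma coeff_aeval_opA_smul_Xpow (P : Polynomial ℂ) (c : ℂ) (m n : ℕ) :
    coeff n (Polynomial.aeval opA P (c • (X : PS) ^ m)) =
      if m ≤ n then c * P.coeff (n - m) else 0 := by
  rw [map_smul, coeff_smul, coeff_aeval_opA]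
  rcases Nat.lt_or_ge n m with h | h
  · rw [if_neg (by omega)]
    rw [Finset.sum_eq_zero, smul_zero]
    intro p hp
    rw [Finset.HasAntidiagonal.mem_antidiagonal] at hp
    rw [coeff_X_pow, if_neg (by omega), mul_zero]
  · rw [if_pos h, Finset.sum_eq_single (n - m, m)]
    · rw [coeff_X_pow, if_pos rfl, mul_one, smul_eq_mul, mul_comm]
    · intro p hp hne
      rw [Finset.HasAntidiagonal.mem_antidiagonal] at hp
      rw [coeff_X_pow, if_neg, mul_zero]
      intro hc; apply hne; rw [Prod.ext_iff]; omega
    · intro hp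
      exact absurd (Finset.HasAntidiagonal.mem_antidiagonal.2 (by omega)) hp

def opD : Module.End ℂ PS where
  toFun f := PowerSeries.mk fun n => (n + 1 : ℂ) * coeff (n + 1) f
  map_add' := by intro f g; ext n; simp [mul_add]
  map_smul' := by intro c f; ext n; simp; ring

lemma coeff_opD (f : PS) (n : ℕ) :
    coeff n (opD f) = (n + 1 : ℂ) * coeff (n + 1) f := by
  simp [opD, coeff_mk]

lemma opD_opB : opD * opB = 1 := by
  ext f n
  rw [Module.End.mul_apply, coeff_opD, coeff_opB_succ, Module.End.one_apply,
    mul_div_cancel₀]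
  exact Nat.cast_add_one_ne_zero n

lemma opD_opA_comm : opD * opA = opA * opD + 1 := by
  ext f n
  rw [Module.End.mul_apply, coeff_opD]
  simp only [LinearMap.add_apply, Module.End.mul_apply, Module.End.one_apply, map_add]
  have hA : ∀ (g : PS) (k : ℕ), coeff k (opA g) = if k = 0 then 0 else coeff (k-1) g := by
    intro g k
    show coeff k (X * g) = _
    rcases Nat.eq_zero_or_pos k with h | h
    · simp [h]
    · rw [if_neg (by omega), ← Nat.succ_pred_eq_of_pos h, coeff_succ_X_mul]
      simp
  rw [hA, hA, if_neg (by omega), coeff_opD]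
  simp only [Nat.add_sub_cancel]
  rcases Nat.eq_zero_or_pos n with h | h
  · subst h; simp
  · rw [if_neg (by omega)]
    have hn : (n : ℂ) = ((n - 1 : ℕ) : ℂ) + 1 := by
      have h2 := Nat.succ_pred_eq_of_pos h
      exact_mod_cast congrArg (fun m => ((m : ℕ) : ℂ)) h2.symm
    rw [show n - 1 + 1 = n from Nat.succ_pred_eq_of_pos h, hn]
    ring

lemma opD_opA_pow (n : ℕ) :
    opD * opA ^ n = opA ^ n * opD + (n : ℂ) • opA ^ (n - 1) := by
  induction n with
  | zero => simp
  | succ n ih =>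
    rw [pow_succ, ← mul_assoc, ih, add_mul, mul_assoc, opD_opA_comm, mul_add,
      mul_one, ← mul_assoc, ← pow_succ]
    rcases Nat.eq_zero_or_pos n with h | h
    · subst h; simp
    · rw [Nat.add_sub_cancel, smul_mul_assoc, ← pow_succ,
        show n - 1 + 1 = n from Nat.succ_pred_eq_of_pos h]
      push_cast
      module

lemma opD_aeval (P : Polynomial ℂ) :
    opD * (Polynomial.aeval opA P) =
      (Polynomial.aeval opA P) * opD + Polynomial.aeval opA (Polynomial.derivative P) := by
  induction P using Polynomial.induction_on' with
  | add p q hp hq =>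
    simp only [map_add, mul_add, add_mul, hp, hq]
    abel
  | monomial n c =>
    rw [Polynomial.aeval_monomial, Polynomial.derivative_monomial, Polynomial.aeval_monomial]
    rw [show opD * ((algebraMap ℂ (Module.End ℂ PS)) c * opA ^ n) =
        (algebraMap ℂ (Module.End ℂ PS)) c * (opD * opA ^ n) by
      rw [← mul_assoc, ← Algebra.commutes, mul_assoc]]
    rw [opD_opA_pow, mul_add, mul_assoc]
    congr 1
    simp [map_mul, mul_assoc, Algebra.smul_def]

lemma coeff_aeval_opB_pow_high (P : Polynomial ℂ) (μ : ℕ) (f : PS) (n : ℕ) (h : n < μ) :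
    coeff n (Polynomial.aeval opA P ((opB ^ μ) f)) = 0 := by
  rw [coeff_aeval_opA]
  apply Finset.sum_eq_zero
  intro p hp
  rw [Finset.HasAntidiagonal.mem_antidiagonal] at hp
  rw [coeff_opB_pow_lt _ _ _ (by omega), mul_zero]

lemma partB (x : Module.End ℂ PS) (P : ℕ → Polynomial ℂ)
    (hP : ∀ (f : PS) (n : ℕ), coeff n (x f) =
      ∑ ν ∈ Finset.range (n + 1), coeff n ((Polynomial.aeval opA (P ν)) ((opB ^ ν) f)))
    (hP0 : P 0 = 0) :
    ∀ (f : PS) (n : ℕ), coeff n ((opD * x) f) =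
      ∑ ν ∈ Finset.range (n + 1),
        coeff n ((Polynomial.aeval opA (P (ν+1) + Polynomial.derivative (P ν))) ((opB ^ ν) f)) := by
  intro f n
  rw [Module.End.mul_apply, coeff_opD, hP f (n+1), Finset.mul_sum]
  have step : ∀ ν ∈ Finset.range (n + 2),
      ((n : ℂ) + 1) * coeff (n+1) (Polynomial.aeval opA (P ν) ((opB ^ ν) f)) =
      coeff n (Polynomial.aeval opA (P ν) (opD ((opB ^ ν) f)))
        + coeff n (Polynomial.aeval opA (Polynomial.derivative (P ν)) ((opB ^ ν) f)) := by
    intro ν _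
    rw [← coeff_opD]
    have := congrArg (fun T : Module.End ℂ PS => coeff n (T ((opB ^ ν) f))) (opD_aeval (P ν))
    simpa using this
  rw [Finset.sum_congr rfl step, Finset.sum_add_distrib]
  have hDB : ∀ μ : ℕ, opD ((opB ^ (μ+1)) f) = (opB ^ μ) f := by
    intro μ
    have : opD * opB ^ (μ+1) = opB ^ μ := by
      rw [pow_succ', ← mul_assoc, opD_opB, one_mul]
    exact congrArg (fun T : Module.End ℂ PS => T f) this
  -- first sum
  have e1 : ∑ ν ∈ Finset.range (n + 2),
      coeff n (Polynomial.aeval opA (P ν) (opD ((opB ^ ν) f)))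
      = ∑ ν ∈ Finset.range (n + 1),
        coeff n (Polynomial.aeval opA (P (ν+1)) ((opB ^ ν) f)) := by
    rw [Finset.sum_range_succ']
    simp only [hP0, map_zero, LinearMap.zero_apply, map_zero, add_zero]
    apply Finset.sum_congr rfl
    intro ν _
    rw [hDB]
  -- second sum
  have e2 : ∑ ν ∈ Finset.range (n + 2),
      coeff n (Polynomial.aeval opA (Polynomial.derivative (P ν)) ((opB ^ ν) f))
      = ∑ ν ∈ Finset.range (n + 1),
        coeff n (Polynomial.aeval opA (Polynomial.derivative (P ν)) ((opB ^ ν) f)) := by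
    rw [Finset.sum_range_succ, coeff_aeval_opB_pow_high _ _ _ _ (by omega), add_zero]
  rw [e1, e2, ← Finset.sum_add_distrib]
  apply Finset.sum_congr rfl
  intro ν _
  rw [map_add, LinearMap.add_apply, map_add]

lemma coeff_term (R : Polynomial ℂ) (ν m n : ℕ) :
    coeff n (Polynomial.aeval opA R ((opB ^ ν) ((X : PS) ^ m))) =
      if m + ν ≤ n then (∏ i ∈ Finset.range ν, ((m : ℂ) + 1 + i))⁻¹ * R.coeff (n - (m + ν)) else 0 := by
  rw [opB_pow_monomial, coeff_aeval_opA_smul_Xpow]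

lemma scalar_id (x y : Module.End ℂ PS) (P Q : ℕ → Polynomial ℂ)
    (hP : ∀ (f : PS) (n : ℕ), coeff n (x f) =
      ∑ ν ∈ Finset.range (n + 1), coeff n ((Polynomial.aeval opA (P ν)) ((opB ^ ν) f)))
    (hQ : ∀ (f : PS) (n : ℕ), coeff n (y f) =
      ∑ ν ∈ Finset.range (n + 1), coeff n ((Polynomial.aeval opA (Q ν)) ((opB ^ ν) f)))
    (hxy : x * opA = opB * y) (m k : ℕ) :
    ∑ ν ∈ Finset.range (m+1), (∏ i ∈ Finset.range ν, ((k:ℂ)+2+i))⁻¹ * (P ν).coeff (m-ν)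
    = (∑ ν ∈ Finset.range (m+1), (∏ i ∈ Finset.range ν, ((k:ℂ)+1+i))⁻¹ * (Q ν).coeff (m-ν))
        / ((k:ℂ)+m+1) := by
  have happ := congrArg (fun T : Module.End ℂ PS => coeff (m+k+1) (T ((X : PS)^k))) hxy
  simp only [Module.End.mul_apply] at happ
  have hAX : opA ((X : PS)^k) = (X : PS)^(k+1) := by
    show (X : PS) * (X : PS)^k = _
    rw [pow_succ']
  rw [hAX, hP] at happ
  rw [show m + k + 1 = (m + k) + 1 from rfl, coeff_opB_succ, hQ] at happ
  -- simplify LHS of happ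
  have hL : ∑ ν ∈ Finset.range (m + k + 1 + 1),
      coeff (m + k + 1) ((Polynomial.aeval opA (P ν)) ((opB ^ ν) ((X : PS) ^ (k + 1))))
      = ∑ ν ∈ Finset.range (m + 1), (∏ i ∈ Finset.range ν, ((k:ℂ)+2+i))⁻¹ * (P ν).coeff (m-ν) := by
    rw [← Finset.sum_subset (Finset.range_subset_range.2 (by omega) :
        Finset.range (m+1) ⊆ Finset.range (m+k+1+1))]
    · apply Finset.sum_congr rfl
      intro ν hν
      rw [Finset.mem_range] at hν
      rw [coeff_term, if_pos (by omega)]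
      congr 1
      · congr 1
        apply Finset.prod_congr rfl
        intro i _
        push_cast
        ring
      · congr 1
        omega
    · intro ν _ hν
      rw [Finset.mem_range, not_lt] at hν
      rw [coeff_term, if_neg (by omega)]
  have hR : ∑ ν ∈ Finset.range (m + k + 1),
      coeff (m + k) ((Polynomial.aeval opA (Q ν)) ((opB ^ ν) ((X : PS) ^ k)))
      = ∑ ν ∈ Finset.range (m + 1), (∏ i ∈ Finset.range ν, ((k:ℂ)+1+i))⁻¹ * (Q ν).coeff (m-ν) := by
    rw [← Finset.sum_subset (Finset.range_subset_range.2 (by omega) :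
        Finset.range (m+1) ⊆ Finset.range (m+k+1))]
    · apply Finset.sum_congr rfl
      intro ν hν
      rw [Finset.mem_range] at hν
      rw [coeff_term, if_pos (by omega)]
      congr 2
      omega
    · intro ν _ hν
      rw [Finset.mem_range, not_lt] at hν
      rw [coeff_term, if_neg (by omega)]
  rw [hL, hR] at happ
  rw [happ]
  congr 1
  push_cast
  ring

lemma prod_linear_monic (s : ℕ) (c : ℕ → ℂ) :
    (∏ i ∈ Finset.range s, (Polynomial.X + Polynomial.C (c i))).Monic := by
  exact Polynomial.monic_prod_of_monic _ _ (fun i _ => Polynomial.monic_X_add_C _)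

lemma prod_linear_natDegree (s : ℕ) (c : ℕ → ℂ) :
    (∏ i ∈ Finset.range s, (Polynomial.X + Polynomial.C (c i))).natDegree = s := by
  rw [Polynomial.natDegree_prod_of_monic _ _ (fun i _ => Polynomial.monic_X_add_C _)]
  simp

lemma key_vanish (m : ℕ) (p q : ℕ → ℂ)
    (hk : ∀ k : ℕ, ∑ ν ∈ Finset.range (m+1), (∏ i ∈ Finset.range ν, ((k:ℂ)+2+i))⁻¹ * p ν
      = (∑ ν ∈ Finset.range (m+1), (∏ i ∈ Finset.range ν, ((k:ℂ)+1+i))⁻¹ * q ν)/((k:ℂ)+m+1)) :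
    p 0 = 0 := by
  set g : Polynomial ℂ :=
    (∑ ν ∈ Finset.range (m+1), Polynomial.C (p ν) *
      ((Polynomial.X + Polynomial.C 1) *
        ∏ i ∈ Finset.range (m-ν), (Polynomial.X + Polynomial.C ((ν:ℂ)+2+i))))
    - ∑ ν ∈ Finset.range (m+1), Polynomial.C (q ν) *
        ∏ i ∈ Finset.range (m-ν), (Polynomial.X + Polynomial.C ((ν:ℂ)+1+i)) with hg_def
  have hne : ∀ (k a : ℕ), ((k:ℂ) + 1 + a) ≠ 0 := by
    intro k a
    have : ((k:ℂ) + 1 + a) = ((k + 1 + a : ℕ) : ℂ) := by push_cast; ring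
    rw [this]
    exact Nat.cast_ne_zero.mpr (by omega)
  have hne2 : ∀ (k a : ℕ), ((k:ℂ) + 2 + a) ≠ 0 := by
    intro k a
    have : ((k:ℂ) + 2 + a) = ((k + 2 + a : ℕ) : ℂ) := by push_cast; ring
    rw [this]
    exact Nat.cast_ne_zero.mpr (by omega)
  have hroot : ∀ k : ℕ, g.IsRoot (k : ℂ) := by
    intro k
    have hW : (∏ i ∈ Finset.range (m+1), ((k:ℂ)+1+i)) =
        (∏ i ∈ Finset.range m, ((k:ℂ)+1+i)) * ((k:ℂ)+m+1) := by
      rw [Finset.prod_range_succ]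
      congr 1
      push_cast; ring
    have hWne : (∏ i ∈ Finset.range m, ((k:ℂ)+1+i)) ≠ 0 :=
      Finset.prod_ne_zero_iff.2 fun i _ => hne k i
    have hmk : ((k:ℂ)+m+1) ≠ 0 := by
      have : ((k:ℂ)+m+1) = ((k:ℂ)+1+m) := by ring
      rw [this]; exact hne k m
    -- multiply hk by W
    have hmul : ∑ ν ∈ Finset.range (m+1),
        (∏ i ∈ Finset.range (m+1), ((k:ℂ)+1+i)) * ((∏ i ∈ Finset.range ν, ((k:ℂ)+2+i))⁻¹ * p ν)
        = ∑ ν ∈ Finset.range (m+1),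
        (∏ i ∈ Finset.range m, ((k:ℂ)+1+i)) * ((∏ i ∈ Finset.range ν, ((k:ℂ)+1+i))⁻¹ * q ν) := by
      rw [← Finset.mul_sum, ← Finset.mul_sum, hk k, hW]
      field_simp
    have e1 : ∀ ν ∈ Finset.range (m+1),
        (∏ i ∈ Finset.range (m+1), ((k:ℂ)+1+i)) * ((∏ i ∈ Finset.range ν, ((k:ℂ)+2+i))⁻¹ * p ν)
        = p ν * (((k:ℂ) + 1) * ∏ i ∈ Finset.range (m-ν), ((k:ℂ) + ((ν:ℂ)+2+i))) := by
      intro ν hν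
      rw [Finset.mem_range] at hν
      have split1 : ∏ i ∈ Finset.range (m+1), ((k:ℂ)+1+i)
          = ((k:ℂ)+1) * ∏ i ∈ Finset.range m, ((k:ℂ)+2+i) := by
        rw [Finset.prod_range_succ']
        rw [mul_comm]
        congr 1
        · push_cast; ring
        · apply Finset.prod_congr rfl; intro i _; push_cast; ring
      have split2 : ∏ i ∈ Finset.range m, ((k:ℂ)+2+i)
          = (∏ i ∈ Finset.range ν, ((k:ℂ)+2+i)) *
            ∏ i ∈ Finset.range (m-ν), ((k:ℂ) + ((ν:ℂ)+2+i)) := by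
        rw [show m = ν + (m - ν) by omega, Finset.prod_range_add]
        rw [show ν + (m-ν) - ν = m - ν by omega]
        congr 1
        apply Finset.prod_congr rfl; intro i _; push_cast; ring
      have hpne : (∏ i ∈ Finset.range ν, ((k:ℂ)+2+i)) ≠ 0 :=
        Finset.prod_ne_zero_iff.2 fun i _ => hne2 k i
      rw [split1, split2]
      field_simp
    have e2 : ∀ ν ∈ Finset.range (m+1),
        (∏ i ∈ Finset.range m, ((k:ℂ)+1+i)) * ((∏ i ∈ Finset.range ν, ((k:ℂ)+1+i))⁻¹ * q ν)
        = q ν * ∏ i ∈ Finset.range (m-ν), ((k:ℂ) + ((ν:ℂ)+1+i)) := by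
      intro ν hν
      rw [Finset.mem_range] at hν
      have split2 : ∏ i ∈ Finset.range m, ((k:ℂ)+1+i)
          = (∏ i ∈ Finset.range ν, ((k:ℂ)+1+i)) *
            ∏ i ∈ Finset.range (m-ν), ((k:ℂ) + ((ν:ℂ)+1+i)) := by
        rw [show m = ν + (m - ν) by omega, Finset.prod_range_add]
        rw [show ν + (m-ν) - ν = m - ν by omega]
        congr 1
        apply Finset.prod_congr rfl; intro i _; push_cast; ring
      have hpne : (∏ i ∈ Finset.range ν, ((k:ℂ)+1+i)) ≠ 0 :=
        Finset.prod_ne_zero_iff.2 fun i _ => hne k i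
      rw [split2]
      field_simp
    rw [Finset.sum_congr rfl e1, Finset.sum_congr rfl e2] at hmul
    show g.eval (k:ℂ) = 0
    rw [hg_def]
    simp only [Polynomial.eval_sub, Polynomial.eval_finset_sum, Polynomial.eval_mul,
      Polynomial.eval_add, Polynomial.eval_X, Polynomial.eval_C, Polynomial.eval_one,
      Polynomial.eval_prod]
    rw [sub_eq_zero]
    exact hmul
  have hg0 : g = 0 := by
    apply Polynomial.eq_zero_of_infinite_isRoot
    apply Set.Infinite.mono (s := Set.range (Nat.cast : ℕ → ℂ))
    · rintro z ⟨k, rfl⟩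
      exact hroot k
    · exact Set.infinite_range_of_injective Nat.cast_injective
  have hcoeff := congrArg (fun h : Polynomial ℂ => h.coeff (m+1)) hg0
  rw [hg_def] at hcoeff
  simp only [Polynomial.coeff_zero, Polynomial.coeff_sub, Polynomial.finset_sum_coeff,
    Polynomial.coeff_C_mul] at hcoeff
  have c1 : ∀ ν ∈ Finset.range (m+1),
      p ν * ((Polynomial.X + Polynomial.C 1) *
        ∏ i ∈ Finset.range (m-ν), (Polynomial.X + Polynomial.C ((ν:ℂ)+2+i))).coeff (m+1)
      = if ν = 0 then p 0 else 0 := by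
    intro ν hν
    rw [Finset.mem_range] at hν
    have hmon : ((Polynomial.X + Polynomial.C (1:ℂ)) *
        ∏ i ∈ Finset.range (m-ν), (Polynomial.X + Polynomial.C ((ν:ℂ)+2+i))).Monic :=
      (Polynomial.monic_X_add_C 1).mul (prod_linear_monic _ _)
    have hdeg : ((Polynomial.X + Polynomial.C (1:ℂ)) *
        ∏ i ∈ Finset.range (m-ν), (Polynomial.X + Polynomial.C ((ν:ℂ)+2+i))).natDegree
        = (m - ν) + 1 := by
      rw [Polynomial.natDegree_mul (Polynomial.monic_X_add_C 1).ne_zero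
        (prod_linear_monic _ _).ne_zero, Polynomial.natDegree_X_add_C,
        prod_linear_natDegree]
      omega
    rcases Nat.eq_zero_or_pos ν with h0 | h0
    · subst h0
      rw [if_pos rfl]
      have hc := hmon.coeff_natDegree
      rw [hdeg, show m - 0 + 1 = m + 1 by omega] at hc
      rw [hc, mul_one]
    · rw [if_neg (by omega),
        Polynomial.coeff_eq_zero_of_natDegree_lt (by rw [hdeg]; omega), mul_zero]
  have c2 : ∀ ν ∈ Finset.range (m+1),
      q ν * (∏ i ∈ Finset.range (m-ν), (Polynomial.X + Polynomial.C ((ν:ℂ)+1+i))).coeff (m+1)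
      = 0 := by
    intro ν hν
    rw [Finset.mem_range] at hν
    rw [Polynomial.coeff_eq_zero_of_natDegree_lt (by rw [prod_linear_natDegree]; omega), mul_zero]
  rw [Finset.sum_congr rfl c1, Finset.sum_congr rfl c2, Finset.sum_ite_eq' (Finset.range (m+1)) 0,
    if_pos (Finset.mem_range.2 (by omega)), Finset.sum_const_zero, sub_zero] at hcoeff
  exact hcoeff


/-- In `Ã`, if `x·a` belongs to the left ideal(-like set) `b·Ã`, then `x`
itself belongs to `b·Ã`. -/
theorem stmt_1 (x : Module.End ℂ PS) (hx : x ∈ Atilde)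
    (h : ∃ y ∈ Atilde, x * opA = opB * y) :
    ∃ z ∈ Atilde, x = opB * z := by
  obtain ⟨P, hP⟩ := hx
  obtain ⟨y, ⟨Q, hQ⟩, hxy⟩ := h
  have hP0 : P 0 = 0 := by
    apply Polynomial.ext
    intro m
    rw [Polynomial.coeff_zero]
    exact key_vanish m (fun ν => (P ν).coeff (m-ν)) (fun ν => (Q ν).coeff (m-ν))
      (fun k => scalar_id x y P Q hP hQ hxy m k)
  refine ⟨opD * x, ⟨fun ν => P (ν+1) + Polynomial.derivative (P ν), partB x P hP hP0⟩, ?_⟩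
  apply LinearMap.ext
  intro f
  apply PowerSeries.ext
  intro n
  cases n with
  | zero =>
    rw [hP f 0, Finset.sum_range_one, hP0, Module.End.mul_apply, coeff_opB, if_pos rfl]
    simp
  | succ n =>
    rw [Module.End.mul_apply, coeff_opB_succ, Module.End.mul_apply, coeff_opD,
      mul_comm, mul_div_assoc, div_self (Nat.cast_add_one_ne_zero n), mul_one]


end
end

section
/- A left Ã-module E is small if and only if: (1) there exists N with a^N·Â(E) = 0; (2) B(E) ⊆ Â(E); (3) ⋂_{m≥0} bᵐ·E ⊆ Â(E); (4) Ker(b) and Coker(b) are finite-dimensional complex vector spaces. Moreover, in that case Â(E) = B(E) and this space is finite-dimensional. -/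
/-
The heart of the matter: if `a^N` kills `Â(E)` then so does `b^(2N)`. Indeed `Â(E)` is stable
under `ℂ[[b]]`, and `ab - ba = b²` gives `a^N b^m = b^m (a + m b)^N`; hence for `x ∈ Â(E)` and
`0 ≤ m ≤ N` the vector `b^N (a + m b)^N x` vanishes. It is a polynomial of degree `N` in `m` whose
top coefficient is `b^(2N) x`, so a Vandermonde argument gives `b^(2N) x = 0`.

Consequently `Â(E) = B(E)` is killed by `b^(2N)`, which makes it finite-dimensional when `E` is of
finite type. Conversely, (1)-(3) force `⋂ bᵐ E = 0`, and over the `b`-adically complete ring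
`ℂ[[b]]` a `b`-adically separated module with finite-dimensional `E / bE` is of finite type
(Nakayama).
-/

set_option synthInstance.maxHeartbeats 1000000
set_option maxHeartbeats 1000000

open PowerSeries

noncomputable section

/-- `ℂ[[b]]`. -/
abbrev Rb := PowerSeries ℂ

variable {E : Type} [AddCommGroup E] [Module Rb E]
  [Module ℂ E] [IsScalarTower ℂ Rb E]

/-- Multiplication by `bⁿ`, i.e. the submodule `bⁿ·G` of a `ℂ[[b]]`-module. -/
def bpow (n : ℕ) (G : Submodule Rb E) : Submodule Rb E :=
  (Ideal.span {(X : Rb) ^ n}) • G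

/-- The operator `b` (multiplication by `X`) as a `ℂ`-linear endomorphism. -/
def bop : E →ₗ[ℂ] E := (LinearMap.lsmul Rb E (X : Rb)).restrictScalars ℂ

/-- An (a,b)-module structure: `E` is a free finite-rank `ℂ[[b]]`-module
and `a` is a `ℂ`-linear, `b`-adically continuous endomorphism with
`a·b − b·a = b²`; equivalently, `a(S·x) = S·a(x) + b²·S'(b)·x` for all
`S ∈ ℂ[[b]]`. -/
def IsABMod (a : E →ₗ[ℂ] E) : Prop :=
  ∀ (S : Rb) (x : E), a (S • x) = S • a x + ((X : Rb) ^ 2 * derivative ℂ S) • x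

/-- The operators `Tⱼ = bʲ·(b⁻¹a)ʲ`, defined recursively by `T₀ = id`,
`T_{j+1} = (a − j·b)∘Tⱼ`. -/
def Tj (a : E →ₗ[ℂ] E) : ℕ → (E →ₗ[ℂ] E)
  | 0 => LinearMap.id
  | (j + 1) => (a - (j : ℂ) • bop) ∘ₗ Tj a j

/-- The `ℂ`-subspace `Σ_{j=0}^{k} aʲ·b^{k−j+1}·E`. -/
def Psi (a : E →ₗ[ℂ] E) (k : ℕ) : Submodule ℂ E :=
  ⨆ j ∈ Finset.range (k + 1),
    Submodule.map (a ^ j) ((bpow (k - j + 1) ⊤).restrictScalars ℂ)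

/-- The regularity condition `a^{k+1}·E ⊆ Σ_{j=0}^{k} aʲ·b^{k−j+1}·E`. -/
def RegCond (a : E →ₗ[ℂ] E) (k : ℕ) : Prop :=
  ∀ x : E, (a ^ (k + 1)) x ∈ Psi a k

/-- `E` is regular (equivalently: some regularity condition holds). -/
def IsRegularAB (a : E →ₗ[ℂ] E) : Prop := ∃ k, RegCond a k

/-- The regularity order `or(E)`. -/
def regOrder (a : E →ₗ[ℂ] E) : ℕ := sInf {k | RegCond a k}

/-- `b^k·E^♯ = b^k·Φ_k(E) = Σ_{j=0}^{k} b^{k−j}·Tⱼ(E)`: the saturation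
`E^♯ = Σ_j (b⁻¹a)ʲ·E` of `E`, renormalized by `b^k` so as to live inside `E`. -/
def Wsat (a : E →ₗ[ℂ] E) (k : ℕ) : Submodule Rb E :=
  Submodule.span Rb
    (⋃ j ∈ Finset.range (k + 1), Set.range fun x : E => ((X : Rb) ^ (k - j)) • (Tj a j x))

/-- A submodule `G ⊆ E` is a simple-pole submodule when `a·G ⊆ b·G`. -/
def SimplePoleSub (a : E →ₗ[ℂ] E) (G : Submodule Rb E) : Prop :=
  ∀ x ∈ G, a x ∈ bpow 1 G

/-- The index `δ(E)`: the smallest `m` with `E^♯ ⊆ b^{−m}·E`,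
i.e. `bᵐ·E^♯ ⊆ E`, i.e. `bᵐ·(b^k·E^♯) ⊆ b^k·E` for `k = or(E)`. -/
def deltaIdx (a : E →ₗ[ℂ] E) : ℕ :=
  sInf {m | bpow m (Wsat a (regOrder a)) ≤ bpow (regOrder a) ⊤}

/-- The biggest simple-pole submodule `E^b` of `E`. -/
def Eb (a : E →ₗ[ℂ] E) : Submodule Rb E := sSup {G | SimplePoleSub a G}

/-- The `b`-torsion `B(E)` of a left `Ã`-module. -/
def Btor (E : Type) [AddCommGroup E] [Module Rb E] : Set E :=
  {x : E | ∃ N : ℕ, ((X : Rb) ^ N) • x = 0}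

/-- The `a`-torsion `A(E)` of a left `Ã`-module. -/
def Ator (a : E →ₗ[ℂ] E) : Set E := {x : E | ∃ N : ℕ, (a ^ N) x = 0}

/-- `Â(E) = {x ∈ E | ℂ[[b]]·x ⊆ A(E)}`. -/
def Ahat (a : E →ₗ[ℂ] E) : Set E := {x : E | ∀ S : Rb, S • x ∈ Ator a}

/-- `E` is small: `E` is a finite-type `ℂ[[b]]`-module, `B(E) ⊆ Â(E)`, and
`a^N·Â(E) = 0` for some `N`. -/
def IsSmall (a : E →ₗ[ℂ] E) : Prop :=
  Module.Finite Rb E ∧ Btor E ⊆ Ahat a ∧ ∃ N : ℕ, ∀ x ∈ Ahat a, (a ^ N) x = 0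

instance IsPrecomplete.pi {R ι : Type*} [CommRing R] [Fintype ι] [DecidableEq ι] (I : Ideal R)
    (M : ι → Type*) [∀ i, AddCommGroup (M i)] [∀ i, Module R (M i)]
    [∀ i, IsPrecomplete I (M i)] : IsPrecomplete I (∀ i, M i) := by
  rw [← AdicCompletion.of_surjective_iff]
  intro z
  choose y hy using fun i ↦
    AdicCompletion.of_surjective I (M i) (AdicCompletion.piEquivOfFintype I M z i)
  refine ⟨y, (AdicCompletion.piEquivOfFintype I M).injective (funext fun i ↦ ?_)⟩
  rw [← hy, AdicCompletion.piEquivOfFintype_apply]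
  simp [AdicCompletion.pi, AdicCompletion.map_of]

section AdicNakayama

variable {R M : Type*} [CommRing R] [AddCommGroup M] [Module R M]

theorem Module.Finite.of_isHausdorff (I : Ideal R) [IsPrecomplete I R] [IsHausdorff I M]
    [Module.Finite R (M ⧸ (I • ⊤ : Submodule R M))] : Module.Finite R M := by
  obtain ⟨n, f, hf⟩ := Module.Finite.exists_fin' R (M ⧸ (I • ⊤ : Submodule R M))
  obtain ⟨g, hg⟩ := Module.projective_lifting_property (I • ⊤ : Submodule R M).mkQ f
    (Submodule.mkQ_surjective _)
  exact .of_surjective g (surjective_of_mkQ_comp_surjective (hg ▸ hf))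

theorem mem_span_singleton_pow_smul_top_iff (r : R) (m : ℕ) (x : M) :
    x ∈ (Ideal.span {r} ^ m • ⊤ : Submodule R M) ↔ ∃ y, x = r ^ m • y := by
  rw [Ideal.span_singleton_pow, Submodule.ideal_span_singleton_smul,
    Submodule.mem_smul_pointwise_iff_exists]
  simp [eq_comm]

theorem isHausdorff_span_singleton_iff (r : R) :
    IsHausdorff (Ideal.span {r}) M ↔ ∀ x : M, (∀ m : ℕ, ∃ y, x = r ^ m • y) → x = 0 := by
  simp_rw [isHausdorff_iff, SModEq.zero, mem_span_singleton_pow_smul_top_iff]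

end AdicNakayama

theorem PowerSeries.X_sq_mul_derivative_X_pow {R : Type*} [CommRing R] (m : ℕ) :
    (X : R⟦X⟧) ^ 2 * derivative R (X ^ m) = (m : R) • X ^ (m + 1) := by
  rw [Derivation.leibniz_pow, derivative_X, smul_eq_mul, mul_one]
  cases m with
  | zero => simp
  | succ m => simp [nsmul_eq_mul, Algebra.smul_def]; ring

theorem PowerSeries.isHausdorff_span_X {K M : Type*} [Field K] [AddCommGroup M] [Module K⟦X⟧ M]
    [Module.Finite K⟦X⟧ M] : IsHausdorff (Ideal.span {(X : K⟦X⟧)}) M :=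
  maximalIdeal_eq_span_X (k := K) ▸ inferInstance

section PowerSeriesModule

variable {K M : Type*} [Field K] [AddCommGroup M] [Module K⟦X⟧ M] [Module K M]
  [IsScalarTower K K⟦X⟧ M]

theorem PowerSeries.C_smul (c : K) (x : M) : (C c : K⟦X⟧) • x = c • x := by
  rw [C_eq_algebraMap, algebraMap_smul]

theorem PowerSeries.trunc_smul_mem_span (f : K⟦X⟧) (n : ℕ) (t : M) :
    (trunc n f : K⟦X⟧) • t ∈ Submodule.span K ((fun k ↦ (X : K⟦X⟧) ^ k • t) '' Set.Iio n) := by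
  rw [trunc_apply, ← Polynomial.coeToPowerSeries.ringHom_apply, map_sum, Finset.sum_smul]
  refine Submodule.sum_mem _ fun k hk ↦ ?_
  rw [Polynomial.coeToPowerSeries.ringHom_apply, Polynomial.coe_monomial,
    monomial_eq_C_mul_X_pow, mul_smul, C_smul]
  exact Submodule.smul_mem _ _ (Submodule.subset_span ⟨k, (Finset.mem_Ico.mp hk).2, rfl⟩)

theorem finiteDimensional_of_X_pow_smul_eq_zero [Module.Finite K⟦X⟧ M] {n : ℕ}
    (h : ∀ x : M, (X : K⟦X⟧) ^ n • x = 0) : FiniteDimensional K M := by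
  set gen : M → Set M := fun t ↦ (fun k ↦ (X : K⟦X⟧) ^ k • t) '' Set.Iio n
  obtain ⟨s, hs⟩ := Module.Finite.fg_top (R := K⟦X⟧) (M := M)
  refine ⟨Submodule.fg_def.mpr ⟨⋃ t ∈ s, gen t,
    s.finite_toSet.biUnion fun t _ ↦ (Set.finite_Iio n).image _, eq_top_iff.mpr fun x _ ↦ ?_⟩⟩
  have hx : x ∈ Submodule.span K⟦X⟧ (s : Set M) := hs ▸ Submodule.mem_top
  obtain ⟨f, -, rfl⟩ := Submodule.mem_span_finset.mp hx
  refine Submodule.sum_mem _ fun t ht ↦ ?_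
  rw [eq_X_pow_mul_shift_add_trunc n (f t), add_smul, mul_comm, mul_smul, h, smul_zero, zero_add]
  exact Submodule.span_mono (Set.subset_biUnion_of_mem (u := gen) ht) (trunc_smul_mem_span _ n t)

theorem finiteDimensional_torsionBy_X_pow [Module.Finite K⟦X⟧ M] (n : ℕ) :
    FiniteDimensional K ((Submodule.torsionBy K⟦X⟧ M (X ^ n)).restrictScalars K) :=
  (finiteDimensional_of_X_pow_smul_eq_zero (n := n) fun x ↦ Subtype.ext x.2 :
    FiniteDimensional K (Submodule.torsionBy K⟦X⟧ M (X ^ n)))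

theorem finiteDimensional_quotient_span_X_smul_top [Module.Finite K⟦X⟧ M] :
    FiniteDimensional K (M ⧸ (Ideal.span {(X : K⟦X⟧)} • ⊤ : Submodule K⟦X⟧ M)) := by
  refine finiteDimensional_of_X_pow_smul_eq_zero (n := 1) fun x ↦ ?_
  obtain ⟨y, rfl⟩ := Submodule.mkQ_surjective _ x
  rw [pow_one, ← map_smul, Submodule.mkQ_apply, Submodule.Quotient.mk_eq_zero]
  exact Submodule.smul_mem_smul (Ideal.mem_span_singleton_self X) Submodule.mem_top

end PowerSeriesModule

section Vandermonde

variable {K V : Type*} [Field K] [AddCommGroup V] [Module K V]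

theorem Module.End.exists_add_smul_pow_eq_sum (A B : Module.End K V) (n : ℕ) :
    ∃ c : ℕ → Module.End K V, c n = B ^ n ∧
      ∀ m : ℕ, (A + (m : K) • B) ^ n = ∑ j ∈ Finset.range (n + 1), (m : K) ^ j • c j := by
  set p : Polynomial (Module.End K V) := Polynomial.C B * Polynomial.X + Polynomial.C A
  have hp : p.natDegree ≤ 1 := Polynomial.natDegree_linear_le
  have hdeg : (p ^ n).natDegree < n + 1 :=
    Nat.lt_succ_of_le ((Polynomial.natDegree_pow_le_of_le n hp).trans (by simp))
  refine ⟨(p ^ n).coeff, by simpa [p] using Polynomial.coeff_pow_of_natDegree_le (m := n) hp,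
    fun m ↦ ?_⟩
  -- `m` is central in `Module.End K V`, so evaluation at `m` is a ring homomorphism.
  set ev := Polynomial.eval₂RingHom' (RingHom.id _) (m : Module.End K V)
    fun _ ↦ (Nat.cast_commute _ _).symm
  have hev : ev p = A + (m : K) • B := by
    simp [ev, p, Nat.cast_smul_eq_nsmul, nsmul_eq_mul, Nat.cast_comm, add_comm]
  rw [← hev, ← map_pow]
  simp only [ev, Polynomial.eval₂RingHom'_apply, Polynomial.eval₂_eq_sum_range' _ hdeg,
    RingHom.id_apply]
  refine Finset.sum_congr rfl fun j _ ↦ ?_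
  rw [← Nat.cast_pow, ← nsmul_eq_mul', ← Nat.cast_smul_eq_nsmul K, Nat.cast_pow]

variable [CharZero K]

theorem eq_zero_of_forall_sum_pow_smul_eq_zero {n : ℕ} (v : Fin n → V)
    (h : ∀ m : Fin n, ∑ j : Fin n, ((m : ℕ) : K) ^ (j : ℕ) • v j = 0) : v = 0 := by
  funext j
  rw [Pi.zero_apply, ← Module.forall_dual_apply_eq_zero_iff K]
  intro φ
  have hinj : Function.Injective (fun i : Fin n ↦ ((i : ℕ) : K)) :=
    fun i i' hii' ↦ Fin.ext (Nat.cast_injective hii')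
  refine congrFun (Matrix.eq_zero_of_mulVec_eq_zero (v := fun j ↦ φ (v j))
    (Matrix.det_vandermonde_ne_zero_iff.mpr hinj) (funext fun m ↦ ?_)) j
  simpa [Matrix.mulVec, dotProduct, Matrix.vandermonde_apply] using congrArg φ (h m)

theorem Module.End.apply_pow_eq_zero_of_forall_add_smul_pow (A B T : Module.End K V) (x : V)
    (n : ℕ) (h : ∀ m ≤ n, T (((A + (m : K) • B) ^ n) x) = 0) : T ((B ^ n) x) = 0 := by
  obtain ⟨c, hcn, hc⟩ := exists_add_smul_pow_eq_sum A B n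
  have hv := eq_zero_of_forall_sum_pow_smul_eq_zero (K := K) (fun j : Fin (n + 1) ↦ T (c j x))
    fun m ↦ by
      rw [Fin.sum_univ_eq_sum_range (fun j ↦ ((m : ℕ) : K) ^ j • T (c j x)),
        ← h m (Nat.lt_succ_iff.mp m.isLt), hc]
      simp [map_sum]
  simpa [hcn] using congrFun hv (Fin.last n)

end Vandermonde

theorem bop_apply (x : E) : (bop : E →ₗ[ℂ] E) x = (X : Rb) • x := rfl

theorem bop_pow_apply (m : ℕ) (x : E) : ((bop : E →ₗ[ℂ] E) ^ m) x = (X : Rb) ^ m • x := by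
  induction m with
  | zero => simp
  | succ m ih => rw [pow_succ', Module.End.mul_apply, ih, bop_apply, smul_smul, ← pow_succ']

theorem restrictScalars_span_X_smul_top :
    (Ideal.span {(X : Rb)} • ⊤ : Submodule Rb E).restrictScalars ℂ = LinearMap.range bop := by
  ext x
  simpa [eq_comm, bop_apply] using mem_span_singleton_pow_smul_top_iff (M := E) (X : Rb) 1 x

theorem finiteDimensional_coker_bop_iff :
    FiniteDimensional ℂ (E ⧸ LinearMap.range (bop : E →ₗ[ℂ] E)) ↔
      Module.Finite ℂ (E ⧸ (Ideal.span {(X : Rb)} • ⊤ : Submodule Rb E)) := by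
  rw [← restrictScalars_span_X_smul_top]
  exact Module.Finite.equiv_iff (Submodule.Quotient.restrictScalarsEquiv ℂ _)

theorem finiteDimensional_ker_bop [Module.Finite Rb E] :
    FiniteDimensional ℂ (LinearMap.ker (bop : E →ₗ[ℂ] E)) := by
  have := finiteDimensional_torsionBy_X_pow (K := ℂ) (M := E) 1
  refine Submodule.finiteDimensional_of_le
    (S₂ := (Submodule.torsionBy Rb E (X ^ 1)).restrictScalars ℂ) fun x hx ↦ ?_
  simpa [bop_apply] using hx

section ABModule

variable {a : E →ₗ[ℂ] E}

theorem IsABMod.mul_bop_pow (ha : IsABMod a) (m : ℕ) :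
    a * bop ^ m = bop ^ m * (a + (m : ℂ) • bop) := by
  ext x
  simp only [Module.End.mul_apply, bop_pow_apply]
  rw [ha, X_sq_mul_derivative_X_pow, LinearMap.add_apply, LinearMap.smul_apply, bop_apply,
    smul_add, smul_assoc, smul_comm ((X : Rb) ^ m) (m : ℂ), smul_smul, ← pow_succ]

theorem IsABMod.pow_mul_bop_pow (ha : IsABMod a) (n m : ℕ) :
    a ^ n * bop ^ m = bop ^ m * (a + (m : ℂ) • bop) ^ n :=
  (SemiconjBy.pow_right (ha.mul_bop_pow m).symm n).symm

set_option linter.unusedSectionVars false in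
theorem smul_mem_Ahat {x : E} (hx : x ∈ Ahat a) (S : Rb) : S • x ∈ Ahat a := fun T ↦ by
  simpa [smul_smul] using hx (T * S)

theorem IsABMod.X_pow_smul_eq_zero_of_mem_Ahat (ha : IsABMod a) {N : ℕ}
    (hN : ∀ x ∈ Ahat a, (a ^ N) x = 0) {x : E} (hx : x ∈ Ahat a) : (X : Rb) ^ (2 * N) • x = 0 := by
  have h := Module.End.apply_pow_eq_zero_of_forall_add_smul_pow a bop (bop ^ N) x N fun m hm ↦ by
    have hsplit : (bop : E →ₗ[ℂ] E) ^ N = bop ^ (N - m) * bop ^ m := by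
      rw [← pow_add, Nat.sub_add_cancel hm]
    have hmem : (bop ^ m) x ∈ Ahat a := by
      rw [bop_pow_apply]
      exact smul_mem_Ahat hx _
    rw [hsplit, Module.End.mul_apply, ← Module.End.mul_apply (bop ^ m), ← ha.pow_mul_bop_pow,
      Module.End.mul_apply, hN _ hmem, map_zero]
  rwa [← Module.End.mul_apply, ← pow_add, bop_pow_apply, ← two_mul] at h

theorem IsABMod.isHausdorff (ha : IsABMod a) {N : ℕ}
    (hN : ∀ x ∈ Ahat a, (a ^ N) x = 0) (hBA : Btor E ⊆ Ahat a)
    (hInt : (⋂ m : ℕ, {x : E | ∃ y : E, x = ((X : Rb) ^ m) • y}) ⊆ Ahat a) :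
    IsHausdorff (Ideal.span {(X : Rb)}) E := by
  refine (isHausdorff_span_singleton_iff _).mpr fun z hz ↦ ?_
  have hzA : z ∈ Ahat a := hInt (Set.mem_iInter.mpr hz)
  obtain ⟨y, rfl⟩ := hz (2 * N)
  have hyA : y ∈ Ahat a := hBA ⟨2 * N + 2 * N, by
    rw [pow_add, mul_smul, ha.X_pow_smul_eq_zero_of_mem_Ahat hN hzA]⟩
  exact ha.X_pow_smul_eq_zero_of_mem_Ahat hN hyA

end ABModule

/-- A left `Ã`-module `E` is small if and only if: (1) `a^N·Â(E) = 0` for some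
`N`; (2) `B(E) ⊆ Â(E)`; (3) `⋂ₘ bᵐ·E ⊆ Â(E)`; (4) `Ker b` and `Coker b` are
finite-dimensional `ℂ`-vector spaces.  Moreover, in that case
`Â(E) = B(E)` and this space is finite-dimensional over `ℂ`. -/
theorem stmt_3 (a : E →ₗ[ℂ] E) (ha : IsABMod a) :
    (IsSmall a ↔
      ((∃ N : ℕ, ∀ x ∈ Ahat a, (a ^ N) x = 0) ∧
       Btor E ⊆ Ahat a ∧
       (⋂ m : ℕ, {x : E | ∃ y : E, x = ((X : Rb) ^ m) • y}) ⊆ Ahat a ∧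
       FiniteDimensional ℂ ↥(LinearMap.ker (bop : E →ₗ[ℂ] E)) ∧
       FiniteDimensional ℂ (E ⧸ LinearMap.range (bop : E →ₗ[ℂ] E)))) ∧
    (IsSmall a →
      Ahat a = Btor E ∧ FiniteDimensional ℂ ↥(Submodule.span ℂ (Btor E))) := by
  constructor
  · constructor
    · rintro ⟨hfin, hBA, hN⟩
      refine ⟨hN, hBA, fun x hx ↦ ?_, finiteDimensional_ker_bop,
        finiteDimensional_coker_bop_iff.mpr finiteDimensional_quotient_span_X_smul_top⟩
      rw [(isHausdorff_span_singleton_iff _).mp isHausdorff_span_X x (Set.mem_iInter.mp hx)]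
      exact fun _ ↦ ⟨0, by simp⟩
    · rintro ⟨⟨N, hN⟩, hBA, hInt, -, hcoker⟩
      have := finiteDimensional_coker_bop_iff.mp hcoker
      have := Module.Finite.of_restrictScalars_finite ℂ Rb
        (E ⧸ (Ideal.span {(X : Rb)} • ⊤ : Submodule Rb E))
      have := ha.isHausdorff hN hBA hInt
      exact ⟨Module.Finite.of_isHausdorff (Ideal.span {(X : Rb)}), hBA, N, hN⟩
  · rintro ⟨hfin, hBA, N, hN⟩
    have hAB : Ahat a ⊆ Btor E := fun x hx ↦ ⟨2 * N, ha.X_pow_smul_eq_zero_of_mem_Ahat hN hx⟩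
    have := finiteDimensional_torsionBy_X_pow (K := ℂ) (M := E) (2 * N)
    refine ⟨hAB.antisymm hBA, Submodule.finiteDimensional_of_le
      (S₂ := (Submodule.torsionBy Rb E (X ^ (2 * N))).restrictScalars ℂ) ?_⟩
    exact Submodule.span_le.mpr fun x hx ↦ ha.X_pow_smul_eq_zero_of_mem_Ahat hN (hBA hx)

end
end

section
/- Every simple-pole (a,b)-module E given by a single generator e_S with a·e_S = b·S(b)·e_S for some S ∈ ℂ[[b]] is isomorphic (as an (a,b)-module) to E_λ with λ = S(0), where E_λ = ℂ[[b]]·e_λ with a·e_λ = λ·b·e_λ. -/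
/-!
Write `S = λ + X·Q` with `λ = S(0)` and let `u = exp (∫ Q)`, a unit of `ℂ⟦X⟧` with `u' = u·Q`.
Then multiplication by `u` is the required isomorphism: by Leibniz,
`X²·(u·T)' = u·X²·T' + u·X²·Q·T`, so the term `X²·Q·T` of `a_S T = X·S·T + X²·T'` is absorbed and only `λ·X·T` remains.
-/

open PowerSeries

noncomputable section

namespace PowerSeries

section IntegratingFactor

variable {A : Type*} [CommRing A] [Algebra ℚ A]

def antiderivative (f : A⟦X⟧) : A⟦X⟧ :=
  X * mk fun n => (n + 1 : ℚ)⁻¹ • coeff n f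

theorem constantCoeff_antiderivative (f : A⟦X⟧) : constantCoeff (antiderivative f) = 0 := by
  simp [antiderivative]

theorem derivative_antiderivative (f : A⟦X⟧) : d⁄dX A (antiderivative f) = f := by
  ext n
  have hn : ((n : A) + 1) = (n + 1 : ℚ) • (1 : A) := by
    rw [add_smul, one_smul, Nat.cast_smul_eq_nsmul, nsmul_one]
  rw [coeff_derivative, antiderivative, coeff_succ_X_mul, coeff_mk, hn, mul_smul_one,
    smul_smul, mul_inv_cancel₀ (Nat.cast_add_one_ne_zero n), one_smul]

theorem hasSubst_antiderivative (f : A⟦X⟧) : HasSubst (antiderivative f) :=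
  HasSubst.of_constantCoeff_zero' (constantCoeff_antiderivative f)

def integratingFactor (Q : A⟦X⟧) : A⟦X⟧ :=
  (exp A).subst (antiderivative Q)

theorem derivative_integratingFactor (Q : A⟦X⟧) :
    d⁄dX A (integratingFactor Q) = integratingFactor Q * Q := by
  rw [integratingFactor, derivative_subst (hasSubst_antiderivative Q), derivative_exp,
    derivative_antiderivative]

theorem isUnit_integratingFactor (Q : A⟦X⟧) : IsUnit (integratingFactor Q) := by
  rw [integratingFactor, ← coe_substAlgHom (hasSubst_antiderivative Q)]
  exact (isUnit_exp A).map _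

end IntegratingFactor

theorem mul_X_mul_add_X_sq_derivative {R : Type*} [CommRing R] {S Q u : R⟦X⟧} {c : R}
    (hS : S = C c + X * Q) (hu : d⁄dX R u = u * Q) (T : R⟦X⟧) :
    u * (X * S * T + X ^ 2 * d⁄dX R T) = C c * X * (u * T) + X ^ 2 * d⁄dX R (u * T) := by
  rw [Derivation.leibniz, hu, hS, smul_eq_mul, smul_eq_mul]
  ring

end PowerSeries

/-- The simple-pole rank-one (a,b)-module `E = ℂ[[b]]·e_S` with
`a·e_S = b·S(b)·e_S` (so that, by continuity, `a(T·e_S) = (b·S·T + b²·T')·e_S`)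
is isomorphic, as an (a,b)-module, to `E_λ` with `λ = S(0)`
(where `E_λ = ℂ[[b]]·e_λ`, `a·e_λ = λ·b·e_λ`):
there is a `ℂ[[b]]`-linear automorphism of `ℂ[[b]]` intertwining the two
`a`-actions. -/
theorem stmt_5 (S : PowerSeries ℂ) :
    ∃ φ : PowerSeries ℂ ≃ₗ[PowerSeries ℂ] PowerSeries ℂ,
      ∀ T : PowerSeries ℂ,
        φ (X * S * T + X ^ 2 * derivative ℂ T) =
          (PowerSeries.C (constantCoeff S)) * X * (φ T) +
            X ^ 2 * derivative ℂ (φ T) := by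
  have hS : S = C (constantCoeff S) + X * mk fun n => coeff (n + 1) S :=
    (eq_X_mul_shift_add_const S).trans (add_comm _ _)
  obtain ⟨u, hu⟩ := isUnit_integratingFactor (mk fun n => coeff (n + 1) S)
  exact ⟨LinearEquiv.smulOfUnit u,
    mul_X_mul_add_X_sq_derivative hS (hu ▸ derivative_integratingFactor _)⟩

end
end

section
/- Every regular (a,b)-module of rank 1 is isomorphic to E_λ for some λ ∈ ℂ. -/
set_option synthInstance.maxHeartbeats 1000000
set_option maxHeartbeats 1000000

open PowerSeries

noncomputable section

variable {E : Type} [AddCommGroup E] [Module Rb E]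
  [Module ℂ E] [IsScalarTower ℂ Rb E]

/-!
Choose a generator `e` of `E`, so that `a e = S e` for some `S ∈ ℂ[[b]]`. Modulo `b E` the
operator `a` acts as multiplication by `S(0)`, so `a^{k+1} e ≡ S(0)^{k+1} e`; regularity puts
`a^{k+1} E` inside `b E`, hence `S(0) = 0` and `S = b T`. Replacing `e` by `U e` for a unit `U`
replaces `S` by `S + b² U'/U`, so it remains to solve `b U' = (T(0) - T) U`, which
`U = exp (-∫ (T - T(0)) db/b)` does.
-/

namespace PowerSeries

variable {K : Type*} [Field K]

/-- The inverse of the Euler operator `X • d⁄dX` on series without constant term; the junk value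
`x / 0 = 0` kills the constant coefficient. -/
noncomputable def eulerPrimitive (f : K⟦X⟧) : K⟦X⟧ :=
  mk fun n => coeff n f / n

theorem constantCoeff_eulerPrimitive (f : K⟦X⟧) : constantCoeff (eulerPrimitive f) = 0 := by
  rw [← coeff_zero_eq_constantCoeff_apply, eulerPrimitive, coeff_mk, Nat.cast_zero, div_zero]

theorem X_mul_derivative_eulerPrimitive [CharZero K] (f : K⟦X⟧) :
    X * d⁄dX K (eulerPrimitive f) = f - C (constantCoeff f) := by
  ext (_ | n)
  · simp
  · rw [coeff_succ_X_mul, coeff_derivative, eulerPrimitive, coeff_mk, map_sub, coeff_C,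
      if_neg n.succ_ne_zero, sub_zero]
    field_simp
    push_cast
    ring

theorem exists_isUnit_mul_add_X_mul_derivative_eq [CharZero K] (T : K⟦X⟧) :
    ∃ U : K⟦X⟧, IsUnit U ∧ U * T + X * d⁄dX K U = C (constantCoeff T) * U := by
  have hG : HasSubst (-eulerPrimitive T) :=
    .of_constantCoeff_zero' (by rw [map_neg, constantCoeff_eulerPrimitive, neg_zero])
  refine ⟨(exp K).subst (-eulerPrimitive T), ?_, ?_⟩
  · rw [← coe_substAlgHom hG]
    exact (isUnit_exp K).map _
  · rw [derivative_subst hG, derivative_exp, map_neg]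
    linear_combination (-(exp K).subst (-eulerPrimitive T)) * X_mul_derivative_eulerPrimitive T

end PowerSeries

section BPow

variable {M : Type} [AddCommGroup M] [Module Rb M]

theorem mem_bpow_one_top {x : M} :
    x ∈ bpow 1 (⊤ : Submodule Rb M) ↔ ∃ y : M, (X : Rb) • y = x := by
  simp [bpow, Submodule.ideal_span_singleton_smul, Submodule.mem_smul_pointwise_iff_exists]

theorem bpow_le_bpow {m n : ℕ} (h : m ≤ n) (G : Submodule Rb M) : bpow n G ≤ bpow m G :=
  Submodule.smul_mono_left (Ideal.span_singleton_le_span_singleton.mpr (pow_dvd_pow X h))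

theorem constantCoeff_eq_zero_of_smul_mem_bpow_one (φ : M →ₗ[Rb] Rb) {e : M} (he : φ e = 1)
    {Q : Rb} (hQ : Q • e ∈ bpow 1 ⊤) : constantCoeff Q = 0 := by
  obtain ⟨y, hy⟩ := mem_bpow_one_top.mp hQ
  have hQ : Q = X * φ y := by simpa [he] using congrArg φ hy.symm
  rw [hQ, map_mul, constantCoeff_X, zero_mul]

end BPow

namespace IsABMod

variable {M : Type} [AddCommGroup M] [Module Rb M] [Module ℂ M] {a : M →ₗ[ℂ] M}

theorem apply_mem_bpow_one (ha : IsABMod a) {x : M} (hx : x ∈ bpow 1 ⊤) :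
    a x ∈ bpow 1 ⊤ := by
  obtain ⟨y, rfl⟩ := mem_bpow_one_top.mp hx
  refine mem_bpow_one_top.mpr ⟨a y + (X : Rb) • y, ?_⟩
  rw [ha, derivative_X, mul_one, smul_add, pow_two, mul_smul]

theorem pow_apply_mem_bpow_one (ha : IsABMod a) (j : ℕ) {x : M} (hx : x ∈ bpow 1 ⊤) :
    (a ^ j) x ∈ bpow 1 ⊤ := by
  induction j with
  | zero => exact hx
  | succ j ih => exact pow_succ' a j ▸ ha.apply_mem_bpow_one ih

theorem psi_le_bpow_one [IsScalarTower ℂ Rb M] (ha : IsABMod a) (k : ℕ) :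
    Psi a k ≤ (bpow 1 ⊤).restrictScalars ℂ :=
  iSup₂_le fun j _ => Submodule.map_le_iff_le_comap.mpr fun _ hx =>
    ha.pow_apply_mem_bpow_one j (bpow_le_bpow (Nat.le_add_left 1 _) ⊤ hx)

theorem pow_apply_sub_C_smul_mem_bpow_one (ha : IsABMod a) {S : Rb} {e : M} (hS : a e = S • e)
    (j : ℕ) : (a ^ j) e - C (constantCoeff S ^ j) • e ∈ bpow 1 ⊤ := by
  set c := constantCoeff S
  induction j with
  | zero => simp
  | succ j ih =>
    obtain ⟨W, hW⟩ := X_dvd_iff.mpr (show constantCoeff (S - C c) = 0 by simp [c])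
    have hstep : (a ^ (j + 1)) e - C (c ^ (j + 1)) • e =
        a ((a ^ j) e - C (c ^ j) • e) + (C (c ^ j) * W) • (X : Rb) • e := by
      rw [pow_succ', Module.End.mul_apply, map_sub, ha, hS, derivative_C, mul_zero, zero_smul,
        add_zero, eq_add_of_sub_eq' hW, pow_succ, map_mul, smul_smul, smul_smul, mul_add,
        add_smul, mul_assoc, mul_comm W X]
      abel
    rw [hstep]
    exact add_mem (ha.apply_mem_bpow_one ih)
      (Submodule.smul_mem _ _ (mem_bpow_one_top.mpr ⟨e, rfl⟩))

theorem constantCoeff_eq_zero_of_isRegularAB [IsScalarTower ℂ Rb M] (ha : IsABMod a)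
    (hreg : IsRegularAB a) (φ : M →ₗ[Rb] Rb) {e : M} (he : φ e = 1) {S : Rb}
    (hS : a e = S • e) : constantCoeff S = 0 := by
  obtain ⟨k, hk⟩ := hreg
  have hmem : C (constantCoeff S ^ (k + 1)) • e ∈ bpow 1 ⊤ := by
    have h := sub_mem (ha.psi_le_bpow_one k (hk e))
      (ha.pow_apply_sub_C_smul_mem_bpow_one hS (k + 1))
    rwa [sub_sub_cancel] at h
  have hpow := constantCoeff_eq_zero_of_smul_mem_bpow_one φ he hmem
  rw [constantCoeff_C] at hpow
  exact pow_eq_zero_iff k.succ_ne_zero |>.mp hpow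

end IsABMod

theorem stmt_6_general [Module.Free Rb E]
    (a : E →ₗ[ℂ] E) (ha : IsABMod a) (hreg : IsRegularAB a)
    (hrank : Module.finrank Rb E = 1) :
    ∃ (lam : ℂ) (e : E), Submodule.span Rb {e} = ⊤ ∧
      a e = ((PowerSeries.C lam) * X) • e := by
  let b := Module.basisUnique Unit hrank
  have hspan : Submodule.span Rb {b ()} = ⊤ := by
    simpa only [Set.range_unique] using b.span_eq
  obtain ⟨S, hS⟩ :=
    Submodule.mem_span_singleton.mp (hspan.ge (Submodule.mem_top (x := a (b ()))))
  obtain ⟨T, rfl⟩ :=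
    X_dvd_iff.mpr (ha.constantCoeff_eq_zero_of_isRegularAB hreg (b.coord ()) (by simp) hS.symm)
  obtain ⟨U, hU, hUT⟩ := exists_isUnit_mul_add_X_mul_derivative_eq T
  refine ⟨constantCoeff T, U • b (), by rwa [Submodule.span_singleton_smul_eq hU], ?_⟩
  rw [ha, ← hS, smul_smul, ← add_smul, smul_smul]
  congr 1
  linear_combination X * hUT

/-- Every regular (a,b)-module of rank 1 is isomorphic to `E_λ` for some
`λ ∈ ℂ`: it admits a `ℂ[[b]]`-generator `e` with `a·e = λ·b·e`. -/
theorem stmt_6 [Module.Free Rb E] [Module.Finite Rb E]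
    (a : E →ₗ[ℂ] E) (ha : IsABMod a) (hreg : IsRegularAB a)
    (hrank : Module.finrank Rb E = 1) :
    ∃ (lam : ℂ) (e : E), Submodule.span Rb {e} = ⊤ ∧
      a e = ((PowerSeries.C lam) * X) • e :=
  stmt_6_general a ha hreg hrank

end
end

section
/- Let E be a regular (a,b)-module and k = or(E) its regularity order, i.e. the smallest k with a^{k+1}·E ⊆ Σ_{j=0}^{k} aʲ·b^{k−j+1}·E. Then Φ_k(E) := Σ_{j=0}^{k} (b⁻¹a)ʲ·E is stable under b⁻¹·a, is a simple-pole (a,b)-module contained in b^{−k}·E, and equals the saturation E^♯. In particular δ(E) ≤ or(E), where δ(E) is the smallest m with E^♯ ⊆ b^{−m}·E. -/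
/-!
Write `Tⱼ = bʲ·(b⁻¹a)ʲ`. The relation `a·bⁿ = bⁿ·a + n·bⁿ⁺¹` gives
`(a − (m+n)·b)·bⁿ = bⁿ·(a − m·b)`, hence `a(bⁿ·Tⱼx) = bⁿ·T_{j+1}x + (n+j)·bⁿ⁺¹·Tⱼx`. On the
generators `b^{k−j}·Tⱼx` of `W = b^k·Φ_k(E)` every term lands in `b·W`, except `T_{k+1}x` when
`j = k`. Expanding `a^{k+1}` and `aʲ·b^{k−j+1}` through the `Tⱼ` only produces terms `bⁿ·Tⱼ` with
`n ≥ 1` and `n + j = k + 1`, all in `b·W`, so the regularity condition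
`a^{k+1}·E ⊆ Σ aʲ·b^{k−j+1}·E` puts `T_{k+1}x` in `b·W` as well.

For minimality, if `b^{−m}·G ⊇ E` is simple-pole, i.e. `(a − m·b)·G ⊆ b·G`, the same identity
gives `bᵐ·Tⱼ(E) ⊆ bʲ·G` by induction on `j`.
-/

set_option synthInstance.maxHeartbeats 1000000
set_option maxHeartbeats 1000000

open PowerSeries

noncomputable section

variable {E : Type} [AddCommGroup E] [Module Rb E]
  [Module ℂ E] [IsScalarTower ℂ Rb E]

section bpow

omit [Module ℂ E] [IsScalarTower ℂ Rb E]

variable {G P : Submodule Rb E} {n : ℕ} {y : E}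

lemma mem_bpow : y ∈ bpow n G ↔ ∃ g ∈ G, (X : Rb) ^ n • g = y := by
  rw [bpow, Submodule.ideal_span_singleton_smul, Submodule.mem_smul_pointwise_iff_exists]

lemma smul_mem_bpow (hy : y ∈ G) : (X : Rb) ^ n • y ∈ bpow n G :=
  mem_bpow.2 ⟨y, hy, rfl⟩

lemma bpow_le_iff : bpow n G ≤ P ↔ ∀ g ∈ G, (X : Rb) ^ n • g ∈ P := by
  refine ⟨fun h g hg => h (smul_mem_bpow hg), fun h y hy => ?_⟩
  obtain ⟨g, hg, rfl⟩ := mem_bpow.1 hy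
  exact h g hg

end bpow

variable {a : E →ₗ[ℂ] E}

omit [IsScalarTower ℂ Rb E] in
lemma IsABMod.map_X_pow_smul (ha : IsABMod a) (n : ℕ) (z : E) :
    a ((X : Rb) ^ n • z) = (X : Rb) ^ n • a z + (n : ℂ) • ((X : Rb) ^ (n + 1) • z) := by
  have hder : (X : Rb) ^ 2 * derivative ℂ ((X : Rb) ^ n) = (n : Rb) * (X : Rb) ^ (n + 1) := by
    cases n with
    | zero => simp
    | succ n =>
      rw [Derivation.leibniz_pow, derivative_X]
      simp only [smul_eq_mul, mul_one, nsmul_eq_mul, Nat.add_sub_cancel]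
      push_cast
      ring
  rw [ha, hder, mul_smul, Nat.cast_smul_eq_nsmul, Nat.cast_smul_eq_nsmul]

lemma IsABMod.map_X_pow_smul_sub (ha : IsABMod a) (m n : ℕ) (z : E) :
    a ((X : Rb) ^ n • z) - ((m + n : ℕ) : ℂ) • ((X : Rb) ^ (n + 1) • z) =
      (X : Rb) ^ n • (a z - (m : ℂ) • ((X : Rb) • z)) := by
  rw [ha.map_X_pow_smul, smul_sub, smul_comm _ (m : ℂ), smul_smul, ← pow_succ, Nat.cast_add,
    add_smul]
  abel

lemma Tj_succ_apply (j : ℕ) (x : E) :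
    Tj a (j + 1) x = a (Tj a j x) - (j : ℂ) • ((X : Rb) • Tj a j x) := by
  simp [Tj, bop]

lemma IsABMod.map_X_pow_smul_Tj (ha : IsABMod a) (n j : ℕ) (y : E) :
    a ((X : Rb) ^ n • Tj a j y) =
      (X : Rb) ^ n • Tj a (j + 1) y + ((j + n : ℕ) : ℂ) • ((X : Rb) ^ (n + 1) • Tj a j y) := by
  rw [Tj_succ_apply, ← ha.map_X_pow_smul_sub]
  abel

section simplePole

variable {k : ℕ}

lemma X_pow_smul_Tj_mem_Wsat {j n : ℕ} (hj : j ≤ k) (hn : k - j ≤ n) (x : E) :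
    (X : Rb) ^ n • Tj a j x ∈ Wsat a k := by
  have hgen : (X : Rb) ^ (k - j) • Tj a j x ∈ Wsat a k :=
    Submodule.subset_span (Set.mem_biUnion (Finset.mem_range.2 (by omega)) ⟨x, rfl⟩)
  have hsplit : (X : Rb) ^ n = (X : Rb) ^ (n - (k - j)) * (X : Rb) ^ (k - j) := by
    rw [← pow_add, Nat.sub_add_cancel hn]
  rw [hsplit, mul_smul]
  exact Submodule.smul_mem _ _ hgen

lemma X_pow_smul_Tj_mem_bpow_one_Wsat {j n : ℕ} (hj : j ≤ k) (hn : k - j < n) (x : E) :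
    (X : Rb) ^ n • Tj a j x ∈ bpow 1 (Wsat a k) := by
  obtain ⟨n, rfl⟩ := Nat.exists_eq_add_of_lt hn
  have h := smul_mem_bpow (n := 1)
    (X_pow_smul_Tj_mem_Wsat (a := a) (n := n + (k - j)) hj le_add_self x)
  rwa [smul_smul, ← pow_add, show 1 + (n + (k - j)) = k - j + n + 1 by omega] at h

/-- The `ℂ`-span of the `bⁿ·Tⱼ(E) = bˢ·(b⁻¹a)ʲ·E` with `n + j = s` and `n ≥ p`. -/
def tjSpan (a : E →ₗ[ℂ] E) (p s : ℕ) : Submodule ℂ E :=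
  Submodule.span ℂ {z | ∃ n j y, p ≤ n ∧ n + j = s ∧ z = (X : Rb) ^ n • Tj a j y}

lemma IsABMod.map_mem_tjSpan (ha : IsABMod a) {p s : ℕ} {z : E} (hz : z ∈ tjSpan a p s) :
    a z ∈ tjSpan a p (s + 1) := by
  induction hz using Submodule.span_induction with
  | mem z hz =>
    obtain ⟨n, j, y, hpn, rfl, rfl⟩ := hz
    rw [ha.map_X_pow_smul_Tj]
    exact add_mem (Submodule.subset_span ⟨n, j + 1, y, hpn, by omega, rfl⟩)
      (Submodule.smul_mem _ _ (Submodule.subset_span ⟨n + 1, j, y, by omega, by omega, rfl⟩))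
  | zero => simp
  | add x y _ _ hx hy => rw [map_add]; exact add_mem hx hy
  | smul c z _ hz => rw [map_smul]; exact Submodule.smul_mem _ _ hz

lemma IsABMod.pow_apply_sub_Tj_mem_tjSpan (ha : IsABMod a) (i : ℕ) (x : E) :
    (a ^ i) x - Tj a i x ∈ tjSpan a 1 i := by
  induction i with
  | zero => simp [Tj]
  | succ i ih =>
    have hexp : (a ^ (i + 1)) x - Tj a (i + 1) x =
        a ((a ^ i) x - Tj a i x) + (i : ℂ) • ((X : Rb) ^ 1 • Tj a i x) := by
      rw [map_sub, Tj_succ_apply, pow_succ', Module.End.mul_apply, pow_one]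
      abel
    rw [hexp]
    exact add_mem (ha.map_mem_tjSpan ih)
      (Submodule.smul_mem _ _ (Submodule.subset_span ⟨1, i, x, le_rfl, by omega, rfl⟩))

lemma IsABMod.pow_apply_X_pow_smul_mem_tjSpan (ha : IsABMod a) (i n : ℕ) (y : E) :
    (a ^ i) ((X : Rb) ^ n • y) ∈ tjSpan a n (n + i) := by
  induction i with
  | zero => exact Submodule.subset_span ⟨n, 0, y, le_rfl, rfl, rfl⟩
  | succ i ih =>
    rw [pow_succ', Module.End.mul_apply]
    exact ha.map_mem_tjSpan ih

lemma tjSpan_le_bpow_one_Wsat {p : ℕ} (hp : 1 ≤ p) :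
    tjSpan a p (k + 1) ≤ (bpow 1 (Wsat a k)).restrictScalars ℂ := by
  rw [tjSpan, Submodule.span_le]
  rintro _ ⟨n, j, y, hpn, hsum, rfl⟩
  exact X_pow_smul_Tj_mem_bpow_one_Wsat (by omega) (by omega) y

lemma IsABMod.Psi_le_bpow_one_Wsat (ha : IsABMod a) :
    Psi a k ≤ (bpow 1 (Wsat a k)).restrictScalars ℂ := by
  refine iSup₂_le fun j hj => ?_
  rintro _ ⟨_, hz, rfl⟩
  obtain ⟨y, -, rfl⟩ := mem_bpow.1 hz
  have hmem := ha.pow_apply_X_pow_smul_mem_tjSpan j (k - j + 1) y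
  rw [show k - j + 1 + j = k + 1 by have := Finset.mem_range.1 hj; omega] at hmem
  exact tjSpan_le_bpow_one_Wsat le_add_self hmem

lemma RegCond.Tj_succ_mem_bpow_one_Wsat (hk : RegCond a k) (ha : IsABMod a) (x : E) :
    Tj a (k + 1) x ∈ bpow 1 (Wsat a k) := by
  have hpow : (a ^ (k + 1)) x ∈ bpow 1 (Wsat a k) := ha.Psi_le_bpow_one_Wsat (hk x)
  have hdiff : (a ^ (k + 1)) x - Tj a (k + 1) x ∈ bpow 1 (Wsat a k) :=
    tjSpan_le_bpow_one_Wsat le_rfl (ha.pow_apply_sub_Tj_mem_tjSpan (k + 1) x)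
  simpa using sub_mem hpow hdiff

lemma RegCond.simplePoleSub_Wsat (hk : RegCond a k) (ha : IsABMod a) :
    SimplePoleSub a (Wsat a k) := by
  intro w hw
  induction hw using Submodule.span_induction with
  | mem z hz =>
    obtain ⟨j, hj, x, rfl⟩ := Set.mem_iUnion₂.1 hz
    have hjk : j ≤ k := Nat.lt_succ_iff.1 (Finset.mem_range.1 hj)
    rw [ha.map_X_pow_smul_Tj]
    refine add_mem ?_ (Submodule.smul_of_tower_mem _ _
      (X_pow_smul_Tj_mem_bpow_one_Wsat (n := k - j + 1) hjk (by omega) x))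
    rcases hjk.lt_or_eq with hjk | rfl
    · exact X_pow_smul_Tj_mem_bpow_one_Wsat hjk (by omega) x
    · simpa using hk.Tj_succ_mem_bpow_one_Wsat ha x
  | zero => simp
  | add x y _ _ hx hy => rw [map_add]; exact add_mem hx hy
  | smul r z hz haz =>
    rw [ha, show (X : Rb) ^ 2 * derivative ℂ r = (X : Rb) ^ 1 * ((X : Rb) * derivative ℂ r) by
      ring, mul_smul]
    exact add_mem (Submodule.smul_mem _ _ haz) (smul_mem_bpow (Submodule.smul_mem _ _ hz))

end simplePole

section minimality

variable {m : ℕ} {G : Submodule Rb E}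
  (hE : bpow m ⊤ ≤ G) (hG : ∀ g ∈ G, a g - (m : ℂ) • ((X : Rb) • g) ∈ bpow 1 G)
include hE hG

lemma IsABMod.X_pow_smul_Tj_mem_bpow (ha : IsABMod a) (j : ℕ) (x : E) :
    (X : Rb) ^ m • Tj a j x ∈ bpow j G := by
  induction j with
  | zero =>
    simpa [Tj] using smul_mem_bpow (n := 0) (hE (smul_mem_bpow (y := x) Submodule.mem_top))
  | succ j ih =>
    obtain ⟨g, hg, hgx⟩ := mem_bpow.1 ih
    obtain ⟨g', hg', hg'g⟩ := mem_bpow.1 (hG g hg)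
    have hshift : (X : Rb) ^ (m + 1) • Tj a j x = (X : Rb) ^ (j + 1) • g := by
      rw [pow_succ', mul_smul, ← hgx, ← mul_smul, ← pow_succ']
    have hstep :
        (X : Rb) ^ m • Tj a (j + 1) x = (X : Rb) ^ j • (a g - (m : ℂ) • ((X : Rb) • g)) := by
      rw [Tj_succ_apply, ← ha.map_X_pow_smul_sub j m, hshift, ← hgx, add_comm j m,
        ha.map_X_pow_smul_sub m j]
    rw [hstep, ← hg'g, smul_smul, ← pow_add]
    exact smul_mem_bpow hg'

lemma IsABMod.bpow_Wsat_le (ha : IsABMod a) (k : ℕ) : bpow m (Wsat a k) ≤ bpow k G := by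
  refine bpow_le_iff.2 fun w hw => ?_
  induction hw using Submodule.span_induction with
  | mem z hz =>
    obtain ⟨j, hj, x, rfl⟩ := Set.mem_iUnion₂.1 hz
    obtain ⟨g, hg, hgx⟩ := mem_bpow.1 (ha.X_pow_smul_Tj_mem_bpow hE hG j x)
    rw [smul_comm, ← hgx, smul_smul, ← pow_add,
      Nat.sub_add_cancel (Nat.lt_succ_iff.1 (Finset.mem_range.1 hj))]
    exact smul_mem_bpow hg
  | zero => simp
  | add x y _ _ hx hy => rw [smul_add]; exact add_mem hx hy
  | smul r z _ hz => rw [smul_comm]; exact Submodule.smul_mem _ _ hz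

end minimality

/-- Stated after renormalization by `b^k`, `k = or(E)`: `Wsat a k = b^k·Φ_k(E)` lies in `E`, and a
simple-pole module `F` with `E ⊆ F ⊆ E[b⁻¹]` is written `F = b^{−m}·G` with `G ⊆ E`, `bᵐ·E ⊆ G` and
`a·g − m·b·g ∈ b·G`, so that `Φ_k(E) ⊆ F` reads `bᵐ·W ⊆ b^k·G`. -/
theorem stmt_7_general (a : E →ₗ[ℂ] E) (ha : IsABMod a) (hreg : IsRegularAB a) :
    (∀ w ∈ Wsat a (regOrder a), a w ∈ bpow 1 (Wsat a (regOrder a))) ∧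
    (∀ (m : ℕ) (G : Submodule Rb E), bpow m ⊤ ≤ G →
        (∀ g ∈ G, a g - (m : ℂ) • ((X : Rb) • g) ∈ bpow 1 G) →
        bpow m (Wsat a (regOrder a)) ≤ bpow (regOrder a) G) ∧
    deltaIdx a ≤ regOrder a := by
  have hk : RegCond a (regOrder a) := Nat.sInf_mem hreg
  exact ⟨hk.simplePoleSub_Wsat ha, fun m G hE hG => ha.bpow_Wsat_le hE hG _,
    Nat.sInf_le (Submodule.smul_mono le_rfl le_top)⟩

/-- Let `E` be a regular (a,b)-module of regularity order `k = or(E)`.  Then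
`Φ_k(E) := Σ_{j=0}^{k} (b⁻¹a)ʲ·E` is stable under `b⁻¹·a` (it is a simple-pole
(a,b)-module), it is contained in `b^{−k}·E`, and it equals the saturation
`E^♯` (it is contained in every simple-pole module containing `E`).
In particular `δ(E) ≤ or(E)`.
Everything is stated after renormalization by `b^k`: `Wsat a k = b^k·Φ_k(E)`
is a submodule of `E`, simple-pole-ness of `Φ_k` reads `a·w ∈ b·W` for `w ∈ W`,
a simple-pole module `F` with `E ⊆ F ⊆ E[b⁻¹]` is written `F = b^{−m}·G` with
`G ⊆ E`, `bᵐ·E ⊆ G`, `a·g − m·b·g ∈ b·G`, and minimality reads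
`bᵐ·W ⊆ b^k·G`. -/
theorem stmt_7 [Module.Free Rb E] [Module.Finite Rb E]
    (a : E →ₗ[ℂ] E) (ha : IsABMod a) (hreg : IsRegularAB a) :
    (∀ w ∈ Wsat a (regOrder a), a w ∈ bpow 1 (Wsat a (regOrder a))) ∧
    (∀ (m : ℕ) (G : Submodule Rb E), bpow m ⊤ ≤ G →
        (∀ g ∈ G, a g - (m : ℂ) • ((X : Rb) • g) ∈ bpow 1 G) →
        bpow m (Wsat a (regOrder a)) ≤ bpow (regOrder a) G) ∧
    deltaIdx a ≤ regOrder a :=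
  stmt_7_general a ha hreg

end
end

section
/- For Hom_b(E,F) between two (a,b)-modules, the map Λ defined by Λ(φ)(e) = φ(a·e) − a·φ(e) sends ℂ[[b]]-linear maps to ℂ[[b]]-linear maps (where b acts on Hom_b(E,F) with sign change, S(b)·φ := S(−b)∘φ appropriately), and satisfies Λ·b̌ − b̌·Λ = b̌², where b̌ denotes the modified b-action. Hence Hom_{a,b}(E,F) is an (a,b)-module. -/
set_option synthInstance.maxHeartbeats 1000000
set_option maxHeartbeats 1000000

open PowerSeries

noncomputable section

variable {E : Type} [AddCommGroup E] [Module Rb E]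
  [Module ℂ E] [IsScalarTower ℂ Rb E]

variable {F : Type} [AddCommGroup F] [Module Rb F] [Module ℂ F] [IsScalarTower ℂ Rb F]

/-- The operator `Λ` on maps `E → F`: `Λ(φ)(e) = φ(a·e) − a·φ(e)`. -/
def LamF (aE : E →ₗ[ℂ] E) (aF : F →ₗ[ℂ] F) (φ : E → F) : E → F :=
  fun x => φ (aE x) - aF (φ x)

/-- The sign-changed action `b̌` of `b` on maps `E → F`: `(b̌·φ)(e) = −b·φ(e)`. -/
def bchk (φ : E → F) : E → F := fun x => -((X : Rb) • φ x)

/-! The correction terms `b²S'(b)·φ(e)` coming from `a_E` and from `a_F` cancel in `Λ(φ)(S·e)`,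
so `Λ(φ)` is `ℂ[[b]]`-linear; in `Λ b̌ − b̌ Λ` only the correction term of `a_F` for `S = b` survives. -/

theorem IsABMod.map_X_smul {M : Type} [AddCommGroup M] [Module Rb M] [Module ℂ M]
    {a : M →ₗ[ℂ] M} (ha : IsABMod a) (x : M) :
    a ((X : Rb) • x) = (X : Rb) • a x + ((X : Rb) ^ 2) • x := by
  rw [ha, derivative_X, mul_one]

def lamLinearMap {M N : Type} [AddCommGroup M] [Module Rb M] [Module ℂ M]
    [AddCommGroup N] [Module Rb N] [Module ℂ N] {aM : M →ₗ[ℂ] M} {aN : N →ₗ[ℂ] N}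
    (haM : IsABMod aM) (haN : IsABMod aN) (φ : M →ₗ[Rb] N) : M →ₗ[Rb] N where
  toFun := LamF aM aN φ
  map_add' x y := by
    simp only [LamF, map_add]
    abel
  map_smul' S x := by
    simp only [LamF, RingHom.id_apply, haM S x, haN S (φ x), map_add, map_smul, smul_sub]
    abel

theorem lamF_bchk_sub_bchk_lamF {M N : Type} [AddCommGroup M] [Module ℂ M]
    [AddCommGroup N] [Module Rb N] [Module ℂ N] (aM : M →ₗ[ℂ] M) {aN : N →ₗ[ℂ] N}
    (haN : ∀ y : N, aN ((X : Rb) • y) = (X : Rb) • aN y + ((X : Rb) ^ 2) • y) (φ : M → N) :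
    LamF aM aN (bchk φ) - bchk (LamF aM aN φ) = fun x : M => ((X : Rb) ^ 2) • φ x := by
  funext x
  simp only [LamF, bchk, Pi.sub_apply, map_neg, haN, smul_sub]
  abel

theorem stmt_12_general
    (aE : E →ₗ[ℂ] E) (aF : F →ₗ[ℂ] F) (haE : IsABMod aE) (haF : IsABMod aF) :
    (∀ φ : E →ₗ[Rb] F, ∃ ψ : E →ₗ[Rb] F, ⇑ψ = LamF aE aF ⇑φ) ∧
    (∀ φ : E →ₗ[Rb] F,
      LamF aE aF (bchk ⇑φ) - bchk (LamF aE aF ⇑φ) =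
        fun x : E => ((X : Rb) ^ 2) • φ x) :=
  ⟨fun φ => ⟨lamLinearMap haE haF φ, rfl⟩,
    fun φ => lamF_bchk_sub_bchk_lamF aE haF.map_X_smul φ⟩

/-- For (a,b)-modules `E`, `F`, the operator `Λ(φ)(e) = φ(a·e) − a·φ(e)` sends
`ℂ[[b]]`-linear maps to `ℂ[[b]]`-linear maps (for the sign-changed `b`-action
`b̌` on `Hom_b(E,F)`), and satisfies `Λ·b̌ − b̌·Λ = b̌²`.  Hence
`Hom_{a,b}(E,F)` is an (a,b)-module. -/
theorem stmt_12 [Module.Free Rb E] [Module.Finite Rb E]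
    [Module.Free Rb F] [Module.Finite Rb F]
    (aE : E →ₗ[ℂ] E) (aF : F →ₗ[ℂ] F) (haE : IsABMod aE) (haF : IsABMod aF) :
    (∀ φ : E →ₗ[Rb] F, ∃ ψ : E →ₗ[Rb] F, ⇑ψ = LamF aE aF ⇑φ) ∧
    (∀ φ : E →ₗ[Rb] F,
      LamF aE aF (bchk ⇑φ) - bchk (LamF aE aF ⇑φ) =
        fun x : E => ((X : Rb) ^ 2) • φ x) :=
  stmt_12_general aE aF haE haF

end
end
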